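/- arXiv:2510.27152 — 2 statements merged into one kernel-verified Lean document; each statement's English description precedes it below -/
import Mathlib

section
/- The matrix Y = L̃⁻¹ X L̃⁻¹ - X is negative semidefinite, where L̃ = I + L, L is the combinatorial Laplacian of an undirected graph on n vertices, and X = L̃ - (1/n)𝟏𝟏ᵀ. -/
/-!
Since `L̃ = I + L` is symmetric and `L̃ 𝟏 = 𝟏`, both `L̃⁻¹` and `L̃` fix the all-ones matrix
`J = 𝟏𝟏ᵀ` from either side, so the rank-one parts cancel and `Y = L̃⁻¹ - L̃`. Writing
`s = L̃ u = u + L u`, one gets `sᵀL̃s - sᵀL̃⁻¹s = sᵀLs + uᵀLu + ‖Lu‖² ≥ 0`.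
-/

open Matrix

namespace Matrix

variable {n R : Type*} [Fintype n]

section CommRing

variable [CommRing R] {B : Matrix n n R}

theorem mul_of_const_eq_of_mulVec_const (h : B *ᵥ (fun _ => 1) = fun _ => 1) :
    B * of (fun _ _ => (1 : R)) = of fun _ _ => 1 := by
  ext i j
  simpa [mul_apply, mulVec, dotProduct] using congrFun h i

theorem of_const_mul_eq_of_vecMul_const (h : (fun _ => 1) ᵥ* B = fun _ => 1) :
    of (fun _ _ => (1 : R)) * B = of fun _ _ => 1 := by
  ext i j
  simpa [mul_apply, vecMul, dotProduct] using congrFun h j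

variable [DecidableEq n]

theorem nonsing_inv_mul_sub_smul_mul_nonsing_inv (hB : IsUnit B.det)
    (hr : B * of (fun _ _ => (1 : R)) = of fun _ _ => 1)
    (hl : of (fun _ _ => (1 : R)) * B = of fun _ _ => 1) (c : R) :
    B⁻¹ * (B - c • of fun _ _ => 1) * B⁻¹ - (B - c • of fun _ _ => 1) = B⁻¹ - B := by
  set J : Matrix n n R := of fun _ _ => 1
  have hr' : B⁻¹ * J = J := by nth_rw 1 [← hr]; exact nonsing_inv_mul_cancel_left B J hB
  have hl' : J * B⁻¹ = J := by nth_rw 1 [← hl]; exact mul_nonsing_inv_cancel_right B J hB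
  rw [mul_sub, nonsing_inv_mul _ hB, sub_mul, one_mul, mul_smul_comm, smul_mul_assoc, hr', hl']
  abel

end CommRing

variable [DecidableEq n]

theorem PosSemidef.dotProduct_inv_one_add_mulVec_le {L : Matrix n n ℝ} (hL : L.PosSemidef)
    (s : n → ℝ) : s ⬝ᵥ ((1 + L)⁻¹ *ᵥ s) ≤ s ⬝ᵥ ((1 + L) *ᵥ s) := by
  have hA : IsUnit (1 + L).det :=
    (isUnit_iff_isUnit_det _).1 (PosDef.one.add_posSemidef hL).isUnit
  set u := (1 + L)⁻¹ *ᵥ s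
  have hs : s = u + L *ᵥ u := by
    have h : (1 + L) *ᵥ u = s := by rw [mulVec_mulVec, mul_nonsing_inv _ hA, one_mulVec]
    rwa [add_mulVec, one_mulVec, eq_comm] at h
  have hLs := hL.dotProduct_mulVec_nonneg s
  have hLu := hL.dotProduct_mulVec_nonneg u
  simp only [star_trivial] at hLs hLu
  have hLuLu : 0 ≤ (L *ᵥ u) ⬝ᵥ (L *ᵥ u) := by
    simpa using dotProduct_star_self_nonneg (L *ᵥ u)
  have hgap : s ⬝ᵥ ((1 + L) *ᵥ s) - s ⬝ᵥ u
      = s ⬝ᵥ (L *ᵥ s) + u ⬝ᵥ (L *ᵥ u) + (L *ᵥ u) ⬝ᵥ (L *ᵥ u) :=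
    calc s ⬝ᵥ ((1 + L) *ᵥ s) - s ⬝ᵥ u = s ⬝ᵥ (L *ᵥ s) + s ⬝ᵥ (s - u) := by
          rw [add_mulVec, one_mulVec, dotProduct_add, dotProduct_sub]; ring
      _ = s ⬝ᵥ (L *ᵥ s) + (u + L *ᵥ u) ⬝ᵥ (L *ᵥ u) := by
          rw [← hs, hs, add_sub_cancel_left]
      _ = _ := by rw [add_dotProduct, add_assoc]
  linarith

end Matrix

/-- The matrix `Y = L̃⁻¹ X L̃⁻¹ - X` is negative semidefinite, where `L̃ = I + L`
and `X = L̃ - (1/n)𝟏𝟏ᵀ`. -/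
theorem stmt_5 {V : Type*} [Fintype V] [DecidableEq V]
    (G : SimpleGraph V) [DecidableRel G.Adj]
    (Lt X Y : Matrix V V ℝ)
    (hLt : Lt = 1 + G.lapMatrix ℝ)
    (hX : X = Lt - (1 / (Fintype.card V : ℝ)) • Matrix.of (fun _ _ => (1 : ℝ)))
    (hY : Y = Lt⁻¹ * X * Lt⁻¹ - X) :
    ∀ s : V → ℝ, s ⬝ᵥ (Y *ᵥ s) ≤ 0 := by
  intro s
  have hL := G.posSemidef_lapMatrix ℝ
  have hdet : IsUnit Lt.det :=
    (isUnit_iff_isUnit_det _).1 (hLt ▸ (PosDef.one.add_posSemidef hL).isUnit)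
  have hfix : Lt *ᵥ (fun _ => 1) = fun _ => 1 := by
    rw [hLt, add_mulVec, one_mulVec, G.lapMatrix_mulVec_const_eq_zero, add_zero]
  have hfix' : (fun _ => 1) ᵥ* Lt = fun _ => 1 := by
    rw [← mulVec_transpose, hLt, transpose_add, transpose_one, (G.isSymm_lapMatrix ℝ).eq, ← hLt,
      hfix]
  have hY' : Y = Lt⁻¹ - Lt := by
    rw [hY, hX]
    exact nonsing_inv_mul_sub_smul_mul_nonsing_inv hdet (mul_of_const_eq_of_mulVec_const hfix)
      (of_const_mul_eq_of_vecMul_const hfix') _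
  rw [hY', sub_mulVec, dotProduct_sub, sub_nonpos, hLt]
  exact hL.dotProduct_inv_one_add_mulVec_le s
end

section
/- For every opinion vector s ∈ ℝⁿ, the disruption at Friedkin–Johnsen equilibrium never exceeds the initial disruption: sᵀ L̃⁻¹ X L̃⁻¹ s ≤ sᵀ X s, where L̃ = I + L and X = L̃ - (1/n)𝟏𝟏ᵀ. -/
/-!
Put `z = L̃⁻¹ s`, so that `s = L̃ z`. Both disruptions become quadratic forms in `z`, and
`I(s) - I(z*) = zᵀ (L̃ X L̃ - X) z`. Since `L 𝟏 = 0`, the all-ones matrix is fixed by `L̃` on both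
sides, so the centering term cancels and `L̃ X L̃ - X = L̃³ - L̃ = L³ + 3L² + 2L`, which is
positive semidefinite.
-/

open Matrix

namespace Matrix

variable {n : Type*} [Fintype n]

theorem dotProduct_transpose_mul_mul_mulVec {R : Type*} [CommSemiring R]
    (A X : Matrix n n R) (v : n → R) :
    v ⬝ᵥ ((Aᵀ * X * A) *ᵥ v) = (A *ᵥ v) ⬝ᵥ (X *ᵥ (A *ᵥ v)) := by
  rw [← mulVec_mulVec, ← mulVec_mulVec, dotProduct_mulVec, vecMul_transpose]

variable [DecidableEq n]

theorem one_add_mul_sub_mul_one_add_sub {R : Type*} [Ring R] {L K : Matrix n n R}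
    (hLK : L * K = 0) (hKL : K * L = 0) :
    (1 + L) * (1 + L - K) * (1 + L) - (1 + L - K) = (1 + L) ^ 3 - (1 + L) := by
  have hK : (1 + L) * K = K := by rw [add_mul, hLK, one_mul, add_zero]
  have hK' : K * (1 + L) = K := by rw [mul_add, hKL, mul_one, add_zero]
  rw [mul_sub, sub_mul, hK, hK', ← pow_two, ← pow_succ]
  abel

theorem PosSemidef.one_add_pow_three_sub {R : Type*} [CommRing R] [PartialOrder R] [StarRing R]
    [StarOrderedRing R] {L : Matrix n n R} (hL : L.PosSemidef) :
    ((1 + L) ^ 3 - (1 + L)).PosSemidef := by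
  have h : (1 + L) ^ 3 - (1 + L) = L ^ 3 + 3 • L ^ 2 + 2 • L := by noncomm_ring
  rw [h]
  exact ((hL.pow 3).add ((hL.pow 2).smul (by norm_num))).add (hL.smul (by norm_num))

theorem dotProduct_inv_mul_mul_inv_mulVec_le {A X : Matrix n n ℝ} (hA : A.IsSymm)
    (hdet : IsUnit A.det) (hAXA : (A * X * A - X).PosSemidef) (s : n → ℝ) :
    s ⬝ᵥ ((A⁻¹ * X * A⁻¹) *ᵥ s) ≤ s ⬝ᵥ (X *ᵥ s) := by
  set z := A⁻¹ *ᵥ s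
  have hs : A *ᵥ z = s := by rw [mulVec_mulVec, mul_nonsing_inv _ hdet, one_mulVec]
  have hAinv : (A⁻¹)ᵀ = A⁻¹ := by rw [transpose_nonsing_inv, hA.eq]
  calc s ⬝ᵥ ((A⁻¹ * X * A⁻¹) *ᵥ s) = z ⬝ᵥ (X *ᵥ z) := by
        rw [← dotProduct_transpose_mul_mul_mulVec, hAinv]
    _ ≤ z ⬝ᵥ ((A * X * A) *ᵥ z) := by
        have := hAXA.dotProduct_mulVec_nonneg z
        rwa [star_trivial, sub_mulVec, dotProduct_sub, sub_nonneg] at this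
    _ = s ⬝ᵥ (X *ᵥ s) := by
        nth_rw 1 [← hA.eq]
        rw [dotProduct_transpose_mul_mul_mulVec, hs]

end Matrix

namespace SimpleGraph

variable {V : Type*} [Fintype V] [DecidableEq V] (G : SimpleGraph V) [DecidableRel G.Adj]
  (R : Type*) [CommRing R]

theorem lapMatrix_mul_of_one : G.lapMatrix R * of (fun _ _ => 1) = 0 := by
  have hJ : (of fun _ _ => 1 : Matrix V V R) = vecMulVec (fun _ => 1) (fun _ => 1) := by
    ext; simp [vecMulVec]
  rw [hJ, mul_vecMulVec, lapMatrix_mulVec_const_eq_zero, zero_vecMulVec]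

theorem of_one_mul_lapMatrix : of (fun _ _ => 1) * G.lapMatrix R = 0 := by
  have hJ : (of fun _ _ => 1 : Matrix V V R)ᵀ = of fun _ _ => 1 := rfl
  rw [← transpose_inj, transpose_mul, (isSymm_lapMatrix R G).eq, hJ, transpose_zero]
  exact lapMatrix_mul_of_one G R

end SimpleGraph

/-- Disruption at Friedkin–Johnsen equilibrium never exceeds the initial disruption:
`sᵀ L̃⁻¹ X L̃⁻¹ s ≤ sᵀ X s` where `L̃ = I + L` and `X = L̃ - (1/n)𝟏𝟏ᵀ`. -/
theorem stmt_6 {V : Type*} [Fintype V] [DecidableEq V]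
    (G : SimpleGraph V) [DecidableRel G.Adj]
    (Lt X : Matrix V V ℝ)
    (hLt : Lt = 1 + G.lapMatrix ℝ)
    (hX : X = Lt - (1 / (Fintype.card V : ℝ)) • Matrix.of (fun _ _ => (1 : ℝ)))
    (s : V → ℝ) :
    s ⬝ᵥ ((Lt⁻¹ * X * Lt⁻¹) *ᵥ s) ≤ s ⬝ᵥ (X *ᵥ s) := by
  have hL := G.posSemidef_lapMatrix ℝ
  have hLt_posDef : Lt.PosDef := hLt ▸ PosDef.one.add_posSemidef hL
  have hLt_symm : Lt.IsSymm := hLt ▸ isSymm_one.add (G.isSymm_lapMatrix ℝ)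
  refine dotProduct_inv_mul_mul_inv_mulVec_le hLt_symm hLt_posDef.det_pos.ne'.isUnit ?_ s
  rw [hX, hLt, one_add_mul_sub_mul_one_add_sub
    (by rw [mul_smul_comm, G.lapMatrix_mul_of_one, smul_zero])
    (by rw [smul_mul_assoc, G.of_one_mul_lapMatrix, smul_zero])]
  exact hL.one_add_pow_three_sub
end
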